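/- arXiv:cond-mat/0610583 — 3 statements merged into one kernel-verified Lean document; each statement's English description precedes it below -/
import Mathlib

section
/- Let a, b, c be nonzero complex numbers. The pair of linear equations (b - c - a*b)*h + (-b - a*c)*i = 0 and (-b - a*c)*h + (b - c - a*b)*i = 0 holds for every pair (h, i) of complex numbers if and only if b = c + a*b and b = -a*c. Moreover, if b = c + a*b and b = -a*c (with c nonzero), then a^2 = a + 1, and hence a = φ or a = -1/φ, where φ = (1+√5)/2. -/
/-!
Specialising `(h, i)` to `(1, 0)` and `(0, 1)` shows that the system holds identically exactly
when both coefficients vanish. Multiplying `b = c + a b` by `a` and substituting `a c = -b` gives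
`b (a² - a - 1) = 0`, and since `b ≠ 0` the loop value `a` is a root of `X² - X - 1`, whose roots
are `φ` and `ψ = -1/φ`.
-/

open Real goldenRatio

theorem forall_add_mul_eq_zero_and_iff {R : Type*} [Semiring R] (p q : R) :
    (∀ h i : R, p * h + q * i = 0 ∧ q * h + p * i = 0) ↔ p = 0 ∧ q = 0 := by
  refine ⟨fun H => ⟨?_, ?_⟩, ?_⟩
  · simpa using (H 1 0).1
  · simpa using (H 0 1).1
  · rintro ⟨rfl, rfl⟩ h i
    simp

theorem sq_eq_add_one_of_eq_add_mul_of_eq_neg_mul {R : Type*} [CommRing R] [NoZeroDivisors R]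
    {a b c : R} (hb : b ≠ 0) (h₁ : b = c + a * b) (h₂ : b = -(a * c)) : a ^ 2 = a + 1 := by
  have hfactor : b * (a ^ 2 - a - 1) = 0 := by linear_combination -h₂ - a * h₁
  linear_combination (mul_eq_zero.mp hfactor).resolve_left hb

theorem Complex.eq_goldenRatio_or_eq_goldenConj {a : ℂ} (ha : a ^ 2 = a + 1) :
    a = (φ : ℂ) ∨ a = (ψ : ℂ) := by
  have hsum : (φ : ℂ) + ψ = 1 := by exact_mod_cast goldenRatio_add_goldenConj
  have hprod : (φ : ℂ) * ψ = -1 := by exact_mod_cast goldenRatio_mul_goldenConj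
  have hroots : (a - φ) * (a - ψ) = 0 := by linear_combination ha - a * hsum + hprod
  simpa only [mul_eq_zero, sub_eq_zero] using hroots

theorem Complex.neg_one_div_goldenRatio : -1 / (φ : ℂ) = ψ := by
  rw [neg_div, one_div, ← ofReal_inv, inv_goldenRatio, ofReal_neg, neg_neg]

theorem stmt_0_general (a b c : ℂ) (hb : b ≠ 0) :
    ((∀ h i : ℂ, (b - c - a * b) * h + (-b - a * c) * i = 0 ∧
        (-b - a * c) * h + (b - c - a * b) * i = 0) ↔
      (b = c + a * b ∧ b = -(a * c))) ∧
    (b = c + a * b → b = -(a * c) →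
      a ^ 2 = a + 1 ∧
        (a = (((1 + Real.sqrt 5) / 2 : ℝ) : ℂ) ∨
          a = -1 / (((1 + Real.sqrt 5) / 2 : ℝ) : ℂ))) := by
  refine ⟨?_, fun h₁ h₂ => ?_⟩
  · rw [forall_add_mul_eq_zero_and_iff]
    exact and_congr ⟨fun h => by linear_combination h, fun h => by linear_combination h⟩
      ⟨fun h => by linear_combination -h, fun h => by linear_combination -h⟩
  · have hsq := sq_eq_add_one_of_eq_add_mul_of_eq_neg_mul hb h₁ h₂
    refine ⟨hsq, ?_⟩
    rw [← goldenRatio, Complex.neg_one_div_goldenRatio]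
    exact Complex.eq_goldenRatio_or_eq_goldenConj hsq

/-- For nonzero complex `a b c`, the linear system
`(b - c - a*b)*h + (-b - a*c)*i = 0` and `(-b - a*c)*h + (b - c - a*b)*i = 0`
holds for all `(h, i)` iff `b = c + a*b` and `b = -a*c`; moreover these two
relations force `a^2 = a + 1`, hence `a = φ` or `a = -1/φ` with `φ = (1+√5)/2`. -/
theorem stmt_0 (a b c : ℂ) (ha : a ≠ 0) (hb : b ≠ 0) (hc : c ≠ 0) :
    ((∀ h i : ℂ, (b - c - a * b) * h + (-b - a * c) * i = 0 ∧
        (-b - a * c) * h + (b - c - a * b) * i = 0) ↔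
      (b = c + a * b ∧ b = -(a * c))) ∧
    (b = c + a * b → b = -(a * c) →
      a ^ 2 = a + 1 ∧
        (a = (((1 + Real.sqrt 5) / 2 : ℝ) : ℂ) ∨
          a = -1 / (((1 + Real.sqrt 5) / 2 : ℝ) : ℂ))) :=
  stmt_0_general a b c hb
end

section
/- Let φ = (1+√5)/2 and let F be the 2×2 real matrix with rows (φ^{-1}, φ^{-1/2}) and (φ^{-1/2}, -φ^{-1}). Then F is symmetric (F = Fᵀ) and F is an involution (F * F = 1); in particular F is an orthogonal (unitary) matrix. -/
/-! A matrix `!![a, b; b, -a]` is symmetric and squares to `(a² + b²) • 1`; for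
`a = φ⁻¹`, `b = φ^{-1/2}` the identity `a² + b² = φ⁻² + φ⁻¹ = 1` is `φ² = φ + 1`. -/

open Real

theorem Matrix.fin_two_traceless_symm_mul_self {R : Type*} [CommRing R] (a b : R) :
    !![a, b; b, -a] * !![a, b; b, -a] = (a ^ 2 + b ^ 2) • (1 : Matrix (Fin 2) (Fin 2) R) := by
  rw [Matrix.mul_fin_two]
  ext i j
  fin_cases i <;> fin_cases j <;> simp <;> ring

theorem Real.inv_goldenRatio_sq_add_inv_sqrt_goldenRatio_sq :
    goldenRatio⁻¹ ^ 2 + (√goldenRatio)⁻¹ ^ 2 = 1 := by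
  rw [inv_pow (√goldenRatio), sq_sqrt goldenRatio_pos.le, inv_goldenRatio, neg_sq, goldenConj_sq]
  ring

/-- The Fibonacci F-matrix `!![φ⁻¹, φ^{-1/2}; φ^{-1/2}, -φ⁻¹]`
(with `φ = (1+√5)/2`) is symmetric and an involution, hence orthogonal. -/
theorem stmt_3 :
    let φ : ℝ := (1 + Real.sqrt 5) / 2
    let F : Matrix (Fin 2) (Fin 2) ℝ :=
      !![φ⁻¹, (Real.sqrt φ)⁻¹; (Real.sqrt φ)⁻¹, -φ⁻¹]
    F = F.transpose ∧ F * F = 1 := by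
  intro φ F
  refine ⟨Matrix.transposeᵣ_eq F, ?_⟩
  rw [Matrix.fin_two_traceless_symm_mul_self, inv_goldenRatio_sq_add_inv_sqrt_goldenRatio_sq,
    one_smul]
end

section
/- Let G be a simple graph on a finite vertex set V with edge set E, let Q be a positive integer, and let γ be a real number. Then the sum over all spin configurations σ : V → {0, 1, …, Q-1} of the product over all edges {i,j} ∈ E of (1 + γ·δ_{σ(i), σ(j)}) equals the sum over all subsets A ⊆ E of Q^{c(A)} · γ^{|A|}, where c(A) is the number of connected components of the spanning subgraph of G with vertex set V and edge set A (isolated vertices count as components). -/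
/-!
Expanding `∏_{e ∈ E} (1 + γ·δ_e)` over subsets `A ⊆ E` turns the left side into
`∑_A γ^{|A|} · #{σ | σ is constant on every edge of A}`. A configuration constant on every
edge of `A` is constant on every connected component of `(V, A)` and is then an arbitrary
colouring of the components, so there are `Q^{c(A)}` of them.
-/

/-- The Potts edge weight `1 + γ·δ_{σ(i),σ(j)}`, as a well-defined function on
unordered pairs `Sym2 V`. -/
noncomputable def pottsEdgeWeight {V : Type*} {Q : ℕ} (γ : ℝ) (σ : V → Fin Q) :
    Sym2 V → ℝ :=
  Sym2.lift ⟨fun i j => 1 + γ * (if σ i = σ j then 1 else 0),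
    fun i j => by by_cases h : σ i = σ j <;> simp [h, eq_comm]⟩

open Finset

namespace SimpleGraph

variable {V α : Type*} {H : SimpleGraph V}

theorem Walk.apply_eq_of_forall_adj {σ : V → α} (hσ : ∀ v w, H.Adj v w → σ v = σ w)
    {v w : V} (p : H.Walk v w) : σ v = σ w := by
  induction p with
  | nil => rfl
  | cons hadj _ ih => exact (hσ _ _ hadj).trans ih

noncomputable def adjInvariantFunEquiv :
    {σ : V → α // ∀ v w, H.Adj v w → σ v = σ w} ≃ (H.ConnectedComponent → α) where
  toFun σ := ConnectedComponent.lift σ.1 fun _ _ p _ => p.apply_eq_of_forall_adj σ.2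
  invFun f := ⟨fun v => f (H.connectedComponentMk v), fun _ _ hadj =>
    congrArg f (ConnectedComponent.sound hadj.reachable)⟩
  left_inv _ := rfl
  right_inv _ := funext fun c => c.ind fun _ => rfl

theorem natCard_adjInvariantFun [Finite V] :
    Nat.card {σ : V → α // ∀ v w, H.Adj v w → σ v = σ w} =
      Nat.card α ^ Nat.card H.ConnectedComponent := by
  rw [Nat.card_congr adjInvariantFunEquiv, Nat.card_fun]

theorem forall_isDiag_map_iff_forall_adj_fromEdgeSet (s : Set (Sym2 V)) (σ : V → α) :
    (∀ e ∈ s, (e.map σ).IsDiag) ↔ ∀ v w, (fromEdgeSet s).Adj v w → σ v = σ w := by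
  refine ⟨fun h v w hadj => h _ ((fromEdgeSet_adj s).1 hadj).1, fun h e he => ?_⟩
  induction e using Sym2.ind with
  | _ v w =>
    rw [Sym2.map_mk, Sym2.mk_isDiag_iff]
    by_cases hvw : v = w
    · rw [hvw]
    · exact h v w ((fromEdgeSet_adj s).2 ⟨he, hvw⟩)

theorem card_filter_forall_isDiag_map [Fintype V] [DecidableEq V] [Fintype α] [DecidableEq α]
    (A : Finset (Sym2 V)) :
    #{σ : V → α | ∀ e ∈ A, (e.map σ).IsDiag} =
      Fintype.card α ^ Nat.card (fromEdgeSet (A : Set (Sym2 V))).ConnectedComponent := by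
  rw [← Fintype.card_subtype, ← Nat.card_eq_fintype_card, ← Nat.card_eq_fintype_card,
    ← natCard_adjInvariantFun]
  exact Nat.card_congr (Equiv.subtypeEquivRight
    (forall_isDiag_map_iff_forall_adj_fromEdgeSet (A : Set (Sym2 V))))

end SimpleGraph

theorem pottsEdgeWeight_eq {V : Type*} {Q : ℕ} (γ : ℝ) (σ : V → Fin Q) (e : Sym2 V) :
    pottsEdgeWeight γ σ e = 1 + γ * if (e.map σ).IsDiag then 1 else 0 := by
  induction e using Sym2.ind with
  | _ v w => simp [pottsEdgeWeight]

theorem prod_pottsEdgeWeight {V : Type*} {Q : ℕ} (γ : ℝ) (σ : V → Fin Q)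
    (s : Finset (Sym2 V)) :
    ∏ e ∈ s, pottsEdgeWeight γ σ e =
      ∑ A ∈ s.powerset, γ ^ #A * if ∀ e ∈ A, (e.map σ).IsDiag then 1 else 0 := by
  simp only [pottsEdgeWeight_eq, prod_one_add, prod_mul_distrib, prod_const, prod_boole]

theorem sum_prod_pottsEdgeWeight {V : Type*} [Fintype V] [DecidableEq V] (Q : ℕ) (γ : ℝ)
    (s : Finset (Sym2 V)) :
    ∑ σ : V → Fin Q, ∏ e ∈ s, pottsEdgeWeight γ σ e =
      ∑ A ∈ s.powerset, γ ^ #A * #{σ : V → Fin Q | ∀ e ∈ A, (e.map σ).IsDiag} := by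
  simp only [prod_pottsEdgeWeight]
  rw [sum_comm]
  refine sum_congr rfl fun A _ => ?_
  rw [← mul_sum]
  congr 1
  -- `∀ e ∈ A, _` gets different `Decidable` instances in the sum and in the filter
  convert sum_boole _ _

theorem stmt_10_general {V : Type*} [Fintype V] [DecidableEq V]
    (G : SimpleGraph V) [DecidableRel G.Adj] (Q : ℕ) (γ : ℝ) :
    ∑ σ : V → Fin Q, ∏ e ∈ G.edgeFinset, pottsEdgeWeight γ σ e =
      ∑ A ∈ G.edgeFinset.powerset,
        (Q : ℝ) ^ (Nat.card (SimpleGraph.fromEdgeSet (↑A : Set (Sym2 V))).ConnectedComponent)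
          * γ ^ A.card := by
  rw [sum_prod_pottsEdgeWeight]
  refine sum_congr rfl fun A _ => ?_
  rw [SimpleGraph.card_filter_forall_isDiag_map, Fintype.card_fin, Nat.cast_pow, mul_comm]

/-- Fortuin–Kasteleyn representation: for a finite simple graph
`G`, a positive integer `Q` and real `γ`,
`∑_{σ : V → {0,…,Q-1}} ∏_{{i,j} ∈ E} (1 + γ δ_{σ i, σ j})
  = ∑_{A ⊆ E} Q^{c(A)} γ^{|A|}`,
where `c(A)` is the number of connected components of the spanning subgraph
with edge set `A` (isolated vertices count as components). -/
theorem stmt_10 {V : Type*} [Fintype V] [DecidableEq V]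
    (G : SimpleGraph V) [DecidableRel G.Adj] (Q : ℕ) (hQ : 0 < Q) (γ : ℝ) :
    ∑ σ : V → Fin Q, ∏ e ∈ G.edgeFinset, pottsEdgeWeight γ σ e =
      ∑ A ∈ G.edgeFinset.powerset,
        (Q : ℝ) ^ (Nat.card (SimpleGraph.fromEdgeSet (↑A : Set (Sym2 V))).ConnectedComponent)
          * γ ^ A.card :=
  stmt_10_general G Q γ
end
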